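/- arXiv:2007.08351 — 6 statements merged into one kernel-verified Lean document; each statement's English description precedes it below -/
import Mathlib

section
/- For a finite discrete-time Markov chain with a set of target states T, the vector (x_s) defined by x_s = 1 if s ∈ T, x_s = 0 if T is not reachable from s, and x_s = Σ_{s'} P(s,s')·x_{s'} otherwise, is the unique solution of this equation system, and x_s equals the probability of eventually reaching T from s. -/
open scoped Classical

/-- `n`-step reachability probability of target set `T` in a finite DTMC with
transition function `P`. -/
noncomputable def reachN {S : Type*} [Fintype S] (P : S → S → ℝ) (T : Set S) : ℕ → S → ℝ
  | 0, s => if s ∈ T then 1 else 0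
  | (n + 1), s => if s ∈ T then 1 else ∑ s' : S, P s s' * reachN P T n s'

/-- Probability of eventually reaching `T` from `s`. -/
noncomputable def reachProb {S : Type*} [Fintype S] (P : S → S → ℝ) (T : Set S) (s : S) : ℝ :=
  ⨆ n, reachN P T n s

/-- `T` is reachable from `s` via transitions of positive probability. -/
def CanReach {S : Type*} (P : S → S → ℝ) (T : Set S) (s : S) : Prop :=
  ∃ t ∈ T, Relation.ReflTransGen (fun a b => 0 < P a b) s t

/-- The equation system characterizing reachability probabilities. -/
def ReachSystem {S : Type*} [Fintype S] (P : S → S → ℝ) (T : Set S) (x : S → ℝ) : Prop :=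
  (∀ s ∈ T, x s = 1) ∧
  (∀ s, ¬ CanReach P T s → x s = 0) ∧
  (∀ s, s ∉ T → CanReach P T s → x s = ∑ s' : S, P s s' * x s')

section
variable {S : Type*} [Fintype S] {P : S → S → ℝ} {T : Set S}

lemma reachN_nonneg (hP : ∀ s s', 0 ≤ P s s') : ∀ n s, 0 ≤ reachN P T n s := by
  intro n
  induction n with
  | zero => intro s; rw [reachN]; split_ifs <;> norm_num
  | succ n ih =>
    intro s; rw [reachN]; split_ifs
    · norm_num
    · exact Finset.sum_nonneg fun s' _ => mul_nonneg (hP s s') (ih s')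

lemma reachN_le_one (hP : ∀ s s', 0 ≤ P s s') (hrow : ∀ s, ∑ s' : S, P s s' = 1) :
    ∀ n s, reachN P T n s ≤ 1 := by
  intro n
  induction n with
  | zero => intro s; rw [reachN]; split_ifs <;> norm_num
  | succ n ih =>
    intro s; rw [reachN]; split_ifs
    · exact le_refl 1
    · calc ∑ s' : S, P s s' * reachN P T n s' ≤ ∑ s' : S, P s s' * 1 :=
          Finset.sum_le_sum fun s' _ => mul_le_mul_of_nonneg_left (ih s') (hP s s')
        _ = 1 := by simp [hrow s]

lemma reachN_mono (hP : ∀ s s', 0 ≤ P s s') : ∀ n s, reachN P T n s ≤ reachN P T (n+1) s := by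
  intro n
  induction n with
  | zero =>
    intro s; rw [reachN, reachN]; split_ifs
    · exact le_refl 1
    · exact Finset.sum_nonneg fun s' _ => mul_nonneg (hP s s') (reachN_nonneg hP 0 s')
  | succ n ih =>
    intro s
    rw [show reachN P T (n+1) s = if s ∈ T then 1 else ∑ s' : S, P s s' * reachN P T n s' from rfl,
      show reachN P T (n+2) s = if s ∈ T then 1 else ∑ s' : S, P s s' * reachN P T (n+1) s' from rfl]
    split_ifs
    · exact le_refl 1
    · exact Finset.sum_le_sum fun s' _ => mul_le_mul_of_nonneg_left (ih s') (hP s s')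

lemma reachN_tendsto (hP : ∀ s s', 0 ≤ P s s') (hrow : ∀ s, ∑ s' : S, P s s' = 1) (s : S) :
    Filter.Tendsto (fun n => reachN P T n s) Filter.atTop (nhds (reachProb P T s)) :=
  tendsto_atTop_ciSup (monotone_nat_of_le_succ fun n => reachN_mono hP n s)
    ⟨1, Set.forall_mem_range.2 fun n => reachN_le_one hP hrow n s⟩

lemma reachProb_one (hs : s ∈ T) : reachProb P T s = 1 := by
  have : ∀ n, reachN P T n s = 1 := by
    intro n; cases n <;> rw [reachN] <;> simp [hs]
  simp [reachProb, this]

lemma reachN_zero_of_not_canReach (hP : ∀ s s', 0 ≤ P s s') :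
    ∀ n s, ¬ CanReach P T s → reachN P T n s = 0 := by
  intro n
  induction n with
  | zero =>
    intro s hs; rw [reachN]
    rw [if_neg]; intro hmem; exact hs ⟨s, hmem, Relation.ReflTransGen.refl⟩
  | succ n ih =>
    intro s hs; rw [reachN]
    rw [if_neg (fun hmem => hs ⟨s, hmem, Relation.ReflTransGen.refl⟩)]
    apply Finset.sum_eq_zero
    intro s' _
    rcases eq_or_lt_of_le (hP s s') with h | h
    · rw [← h, zero_mul]
    · rw [ih s' (fun ⟨t, ht, hpath⟩ => hs ⟨t, ht, Relation.ReflTransGen.head h hpath⟩), mul_zero]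
lemma reachProb_fix (hP : ∀ s s', 0 ≤ P s s') (hrow : ∀ s, ∑ s' : S, P s s' = 1)
    {s : S} (hs : s ∉ T) : reachProb P T s = ∑ s' : S, P s s' * reachProb P T s' := by
  have h1 : Filter.Tendsto (fun n => reachN P T (n+1) s) Filter.atTop (nhds (reachProb P T s)) :=
    (reachN_tendsto hP hrow s).comp (Filter.tendsto_add_atTop_nat 1)
  have h2 : Filter.Tendsto (fun n => ∑ s' : S, P s s' * reachN P T n s') Filter.atTop
      (nhds (∑ s' : S, P s s' * reachProb P T s')) :=
    tendsto_finset_sum _ fun s' _ => (reachN_tendsto hP hrow s').const_mul (P s s')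
  have h3 : (fun n => reachN P T (n+1) s) = fun n => ∑ s' : S, P s s' * reachN P T n s' := by
    funext n; rw [reachN, if_neg hs]
  rw [h3] at h1
  exact tendsto_nhds_unique h1 h2

lemma uniq_aux (hP : ∀ s s', 0 ≤ P s s') (hrow : ∀ s, ∑ s' : S, P s s' = 1)
    {y : S → ℝ} (hT : ∀ s ∈ T, y s = 0) (h0 : ∀ s, ¬ CanReach P T s → y s = 0)
    (heq : ∀ s, s ∉ T → CanReach P T s → y s = ∑ s' : S, P s s' * y s') :
    ∀ s, y s = 0 := by
  cases isEmpty_or_nonempty S with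
  | inl h => intro s; exact absurd (Nonempty.intro s) (not_nonempty_iff.2 h)
  | inr h =>
  obtain ⟨s₀, -, hmax⟩ := Finset.exists_max_image Finset.univ (fun s => |y s|)
      ⟨Classical.arbitrary S, Finset.mem_univ _⟩
  set M := |y s₀| with hM
  have hub : ∀ s, |y s| ≤ M := fun s => hmax s (Finset.mem_univ s)
  -- key: if |y s| = M and s can reach T (witnessed by a path to t ∈ T), then M ≤ 0
  have key : ∀ t ∈ T, ∀ s, Relation.ReflTransGen (fun a b => 0 < P a b) s t →
      |y s| = M → M ≤ 0 := by
    intro t ht s hpath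
    induction hpath using Relation.ReflTransGen.head_induction_on with
    | refl => intro hs; rw [← hs, hT t ht]; simp
    | head hab hrest ih =>
      rename_i a b
      intro ha
      by_cases haT : a ∈ T
      · rw [← ha, hT a haT]; simp
      · have hcr : CanReach P T a := ⟨t, ht, Relation.ReflTransGen.head hab hrest⟩
        have e1 : y a = ∑ s' : S, P a s' * y s' := heq a haT hcr
        have e2 : M ≤ ∑ s' : S, P a s' * |y s'| := by
          rw [← ha, e1]
          calc |∑ s' : S, P a s' * y s'| ≤ ∑ s' : S, |P a s' * y s'| :=
              Finset.abs_sum_le_sum_abs _ _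
            _ = ∑ s' : S, P a s' * |y s'| := by
              refine Finset.sum_congr rfl fun s' _ => ?_
              rw [abs_mul, abs_of_nonneg (hP a s')]
        have e3 : ∑ s' : S, P a s' * |y s'| ≤ M := by
          calc ∑ s' : S, P a s' * |y s'| ≤ ∑ s' : S, P a s' * M :=
              Finset.sum_le_sum fun s' _ => mul_le_mul_of_nonneg_left (hub s') (hP a s')
            _ = M := by rw [← Finset.sum_mul, hrow a, one_mul]
        have e4 : ∑ s' : S, P a s' * (M - |y s'|) = 0 := by
          have : ∑ s' : S, P a s' * (M - |y s'|)
              = (∑ s' : S, P a s' * M) - ∑ s' : S, P a s' * |y s'| := by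
            rw [← Finset.sum_sub_distrib]
            exact Finset.sum_congr rfl fun s' _ => by ring
          rw [this, ← Finset.sum_mul, hrow a, one_mul]
          linarith
        have hb : |y b| = M := by
          have := (Finset.sum_eq_zero_iff_of_nonneg fun s' _ =>
            mul_nonneg (hP a s') (sub_nonneg.2 (hub s'))).1 e4 b (Finset.mem_univ b)
          rcases mul_eq_zero.1 this with h | h
          · exact absurd h (ne_of_gt hab)
          · linarith [sub_eq_zero.1 h]
        exact ih hb
  have hM0 : M ≤ 0 := by
    by_cases hcr : CanReach P T s₀
    · obtain ⟨t, ht, hpath⟩ := hcr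
      exact key t ht s₀ hpath rfl
    · rw [hM, h0 s₀ hcr]; simp
  intro s
  have := abs_nonneg (y s)
  have := hub s
  have : |y s| = 0 := le_antisymm (by linarith) (abs_nonneg _)
  exact abs_eq_zero.1 this

end

/-- The reachability probabilities form the unique solution of the equation system. -/
theorem stmt0 {S : Type*} [Fintype S] (P : S → S → ℝ) (s_init : S) (T : Set S)
    (hP : ∀ s s', 0 ≤ P s s') (hrow : ∀ s, ∑ s' : S, P s s' = 1) :
    ReachSystem P T (reachProb P T) ∧
      ∀ x : S → ℝ, ReachSystem P T x → x = reachProb P T := by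
  have hsys : ReachSystem P T (reachProb P T) := by
    refine ⟨fun s hs => reachProb_one hs, fun s hs => ?_, fun s hs _ => reachProb_fix hP hrow hs⟩
    have : ∀ n, reachN P T n s = 0 := fun n => reachN_zero_of_not_canReach hP n s hs
    simp [reachProb, this]
  refine ⟨hsys, fun x hx => ?_⟩
  obtain ⟨hT, h0, heq⟩ := hx
  obtain ⟨hT', h0', heq'⟩ := hsys
  have key : ∀ s, x s - reachProb P T s = 0 := by
    apply uniq_aux hP hrow
    · intro s hs; rw [hT s hs, hT' s hs]; ring
    · intro s hs; rw [h0 s hs, h0' s hs]; ring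
    · intro s hs hcr
      rw [heq s hs hcr, heq' s hs hcr, ← Finset.sum_sub_distrib]
      exact Finset.sum_congr rfl fun s' _ => by ring
  funext s
  have := key s
  linarith
end

section
/- Let D be a POMDP and D' result from D by splitting an observation z into z_A and z_B, where the state sets A and B partition λ⁻¹(z) and have disjoint pre-observations. Then for any two finite paths π₁, π₂ of the underlying MDP, the observation sequences under the new observation function λ' agree, λ'(π₁) = λ'(π₂), if and only if the original observation sequences agree, λ(π₁) = λ(π₂). -/
open scoped Classical

/-- A POMDP: transition probabilities, observation function and initial state.
(The reward function is irrelevant for this statement.) -/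
structure POMDP (S O Act : Type*) where
  P : S → Act → S → ℝ
  obs : S → O
  init : S

/-- A finite path of the underlying MDP, represented as a start state together with the
list of (action, successor) steps; every step must have positive probability. -/
inductive IsPath {S O Act : Type*} (M : POMDP S O Act) : S → List (Act × S) → Prop
  | nil (s : S) : IsPath M s []
  | cons {s : S} {a : Act} {s' : S} {l : List (Act × S)}
      (h : 0 < M.P s a s') (ht : IsPath M s' l) : IsPath M s ((a, s') :: l)

/-- The observation sequence of a finite path, w.r.t. an observation function `lam`. -/
def obsSeq {S Act O' : Type*} (lam : S → O') (π : S × List (Act × S)) :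
    O' × List (Act × O') :=
  (lam π.1, π.2.map fun p => (p.1, lam p.2))

/-- Pre-observations of a state: pairs (observation of a predecessor, action) that can
lead into the state with positive probability. -/
def preObs {S O Act : Type*} (M : POMDP S O Act) (s : S) : Set (O × Act) :=
  {p | ∃ s', M.obs s' = p.1 ∧ 0 < M.P s' p.2 s}

/-- The new observation function after splitting observation `z` into `z_A` (for states
in `A`) and `z_B` (for states in `B`). -/
noncomputable def splitObs {S O Act : Type*} (M : POMDP S O Act) (A B : Set S) :
    S → O ⊕ Bool := fun s =>
  if s ∈ A then Sum.inr true else if s ∈ B then Sum.inr false else Sum.inl (M.obs s)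

theorem splitEq {S O Act : Type*} (M : POMDP S O Act) (z : O) (A B : Set S)
    (hpart : A ∪ B = {s | M.obs s = z}) (hdisj : Disjoint A B)
    (hpre : Disjoint (⋃ s ∈ A, preObs M s) (⋃ s ∈ B, preObs M s))
    {s₁ s₂ : S} {a : Act} {s₁' s₂' : S} (h1 : 0 < M.P s₁ a s₁') (h2 : 0 < M.P s₂ a s₂')
    (hobs : M.obs s₁ = M.obs s₂) (hobs' : M.obs s₁' = M.obs s₂') :
    splitObs M A B s₁' = splitObs M A B s₂' := by
  have pair1 : (M.obs s₁, a) ∈ preObs M s₁' := ⟨s₁, rfl, h1⟩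
  have pair2 : (M.obs s₁, a) ∈ preObs M s₂' := ⟨s₂, hobs.symm, h2⟩
  have noAB : ¬ (s₁' ∈ A ∧ s₂' ∈ B) := by
    rintro ⟨hA, hB⟩
    exact Set.disjoint_left.mp hpre
      (Set.mem_biUnion hA pair1) (Set.mem_biUnion hB pair2)
  have noBA : ¬ (s₁' ∈ B ∧ s₂' ∈ A) := by
    rintro ⟨hB, hA⟩
    exact Set.disjoint_left.mp hpre
      (Set.mem_biUnion hA pair2) (Set.mem_biUnion hB pair1)
  by_cases hz : M.obs s₁' = z
  · have m1 : s₁' ∈ A ∪ B := by rw [hpart]; exact hz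
    have m2 : s₂' ∈ A ∪ B := by rw [hpart]; rw [Set.mem_setOf_eq, ← hobs']; exact hz
    rcases m1 with hA1 | hB1 <;> rcases m2 with hA2 | hB2
    · simp [splitObs, hA1, hA2]
    · exact absurd ⟨hA1, hB2⟩ noAB
    · exact absurd ⟨hB1, hA2⟩ noBA
    · have nA1 : s₁' ∉ A := fun h => Set.disjoint_left.mp hdisj h hB1
      have nA2 : s₂' ∉ A := fun h => Set.disjoint_left.mp hdisj h hB2
      simp [splitObs, nA1, nA2, hB1, hB2]
  · have n1 : s₁' ∉ A ∪ B := fun h => hz (by rw [hpart] at h; exact h)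
    have n2 : s₂' ∉ A ∪ B := fun h => hz (by rw [hpart] at h; exact hobs' ▸ h)
    simp only [Set.mem_union, not_or] at n1 n2
    simp [splitObs, n1.1, n1.2, n2.1, n2.2, hobs']

theorem listEq {S O Act : Type*} (M : POMDP S O Act) (z : O) (A B : Set S)
    (hpart : A ∪ B = {s | M.obs s = z}) (hdisj : Disjoint A B)
    (hpre : Disjoint (⋃ s ∈ A, preObs M s) (⋃ s ∈ B, preObs M s)) :
    ∀ (l₁ l₂ : List (Act × S)) (s₁ s₂ : S), IsPath M s₁ l₁ → IsPath M s₂ l₂ →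
      M.obs s₁ = M.obs s₂ →
      l₁.map (fun p => (p.1, M.obs p.2)) = l₂.map (fun p => (p.1, M.obs p.2)) →
      l₁.map (fun p => (p.1, splitObs M A B p.2)) = l₂.map (fun p => (p.1, splitObs M A B p.2))
  | [], [], _, _, _, _, _, _ => rfl
  | (a₁, t₁) :: l₁, (a₂, t₂) :: l₂, s₁, s₂, hp₁, hp₂, hobs, hmap => by
      simp only [List.map_cons, List.cons.injEq, Prod.mk.injEq] at hmap ⊢
      obtain ⟨⟨ha, hto⟩, htail⟩ := hmap
      cases hp₁ with
      | cons h1 ht1 =>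
        cases hp₂ with
        | cons h2 ht2 =>
          subst ha
          exact ⟨⟨rfl, splitEq M z A B hpart hdisj hpre h1 h2 hobs hto⟩,
            listEq M z A B hpart hdisj hpre l₁ l₂ t₁ t₂ ht1 ht2 hto htail⟩

/-- Observation splitting with disjoint pre-observations: two finite paths from the
initial state have equal observation sequences under the new observation function iff
they have equal observation sequences under the old one. -/
theorem stmt3 {S O Act : Type*} (M : POMDP S O Act) (z : O) (A B : Set S)
    (hpart : A ∪ B = {s | M.obs s = z}) (hdisj : Disjoint A B)
    (hpre : Disjoint (⋃ s ∈ A, preObs M s) (⋃ s ∈ B, preObs M s))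
    (hinitObs : ∀ s, M.obs s = M.obs M.init → s = M.init)
    (hinitIn : ∀ s a, M.P s a M.init = 0) :
    ∀ l₁ l₂ : List (Act × S), IsPath M M.init l₁ → IsPath M M.init l₂ →
      (obsSeq (splitObs M A B) (M.init, l₁) = obsSeq (splitObs M A B) (M.init, l₂) ↔
        obsSeq M.obs (M.init, l₁) = obsSeq M.obs (M.init, l₂)) := by
  intro l₁ l₂ hp₁ hp₂
  constructor
  · intro h
    -- recover obs from splitObs
    have hrec : ∀ s : S, M.obs s = Sum.elim id (fun _ => z) (splitObs M A B s) := by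
      intro s
      by_cases hA : s ∈ A
      · simp only [splitObs, if_pos hA, Sum.elim_inr]
        have : s ∈ A ∪ B := Or.inl hA
        rw [hpart] at this; exact this
      · by_cases hB : s ∈ B
        · simp only [splitObs, if_neg hA, if_pos hB, Sum.elim_inr]
          have : s ∈ A ∪ B := Or.inr hB
          rw [hpart] at this; exact this
        · simp [splitObs, hA, hB]
    have key : ∀ l : List (Act × S),
        l.map (fun p => (p.1, M.obs p.2)) =
        (l.map (fun p => (p.1, splitObs M A B p.2))).map
          (fun q => (q.1, Sum.elim id (fun _ => z) q.2)) := by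
      intro l
      rw [List.map_map]
      refine List.map_congr_left fun p _ => ?_
      simp [hrec p.2]
    simp only [obsSeq, Prod.mk.injEq] at h ⊢
    refine ⟨trivial, ?_⟩
    rw [key l₁, key l₂, h.2]
  · intro h
    simp only [obsSeq, Prod.mk.injEq] at h ⊢
    exact ⟨trivial, listEq M z A B hpart hdisj hpre l₁ l₂ _ _ hp₁ hp₂ rfl h.2⟩
end

section
/- Let D' result from POMDP D by observation splitting. Then the set of induced DTMCs under all observation-based policies is the same for D and D': {D_σ : σ ∈ Σ_D} = {D'_σ : σ ∈ Σ_{D'}}. -/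
open scoped Classical

/-- The last state of a finite path. -/
def lastState {S Act : Type*} (π : S × List (Act × S)) : S :=
  (π.2.map Prod.snd).getLastD π.1

/-- A (history-dependent, randomized) policy: a probability distribution over actions for
every finite path. -/
def IsPolicy {S Act : Type*} [Fintype Act] (σ : S × List (Act × S) → Act → ℝ) : Prop :=
  ∀ π, (∀ a, 0 ≤ σ π a) ∧ ∑ a : Act, σ π a = 1

/-- A policy is observation-based (w.r.t. observation function `lam`) if it makes the
same decision on any two paths (from the initial state) with equal observation
sequences. -/
def ObsBased {S O Act O' : Type*} (M : POMDP S O Act) (lam : S → O')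
    (σ : S × List (Act × S) → Act → ℝ) : Prop :=
  ∀ l₁ l₂ : List (Act × S), IsPath M M.init l₁ → IsPath M M.init l₂ →
    obsSeq lam (M.init, l₁) = obsSeq lam (M.init, l₂) →
    σ (M.init, l₁) = σ (M.init, l₂)

/-- The transition function of the DTMC induced on finite paths by a policy `σ`. -/
noncomputable def inducedP {S O Act : Type*} (M : POMDP S O Act)
    (σ : S × List (Act × S) → Act → ℝ)
    (π π' : S × List (Act × S)) : ℝ :=
  if h : ∃ a s', π' = (π.1, π.2 ++ [(a, s')]) then
    σ π h.choose * M.P (lastState π) h.choose h.choose_spec.choose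
  else 0

section Aux

variable {S O Act : Type*} (M : POMDP S O Act) (z : O) (A B : Set S)

lemma splitObs_inj_obs (hpart : A ∪ B = {s | M.obs s = z}) {s t : S}
    (h : splitObs M A B s = splitObs M A B t) : M.obs s = M.obs t := by
  have hA : ∀ u, u ∈ A → M.obs u = z := fun u hu => by
    have : u ∈ A ∪ B := Or.inl hu
    rwa [hpart] at this
  have hB : ∀ u, u ∈ B → M.obs u = z := fun u hu => by
    have : u ∈ A ∪ B := Or.inr hu
    rwa [hpart] at this
  unfold splitObs at h
  split_ifs at h <;> simp_all

lemma obs_eq_splitObs_eq (hpart : A ∪ B = {s | M.obs s = z})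
    (hpre : Disjoint (⋃ s ∈ A, preObs M s) (⋃ s ∈ B, preObs M s))
    {s₁ s₂ t₁ t₂ : S} {a : Act} (hs : M.obs s₁ = M.obs s₂)
    (h1 : 0 < M.P s₁ a t₁) (h2 : 0 < M.P s₂ a t₂) (ht : M.obs t₁ = M.obs t₂) :
    splitObs M A B t₁ = splitObs M A B t₂ := by
  have hA : ∀ u, u ∈ A → M.obs u = z := fun u hu => by
    have : u ∈ A ∪ B := Or.inl hu
    rwa [hpart] at this
  have hB : ∀ u, u ∈ B → M.obs u = z := fun u hu => by
    have : u ∈ A ∪ B := Or.inr hu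
    rwa [hpart] at this
  have hmem1 : (M.obs s₁, a) ∈ preObs M t₁ := ⟨s₁, rfl, h1⟩
  have hmem2 : (M.obs s₁, a) ∈ preObs M t₂ := ⟨s₂, hs.symm, h2⟩
  have hnotAB : ¬ (t₁ ∈ A ∧ t₂ ∈ B) := by
    rintro ⟨hA1, hB2⟩
    exact Set.disjoint_left.mp hpre
      (Set.mem_biUnion hA1 hmem1) (Set.mem_biUnion hB2 hmem2)
  have hnotBA : ¬ (t₁ ∈ B ∧ t₂ ∈ A) := by
    rintro ⟨hB1, hA2⟩
    exact Set.disjoint_left.mp hpre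
      (Set.mem_biUnion hA2 hmem2) (Set.mem_biUnion hB1 hmem1)
  have hin : t₁ ∈ A ∪ B ↔ t₂ ∈ A ∪ B := by
    rw [hpart]; simp [Set.mem_setOf_eq, ht]
  have hAiff : t₁ ∈ A ↔ t₂ ∈ A := by
    constructor
    · intro h
      rcases hin.mp (Or.inl h) with h' | h'
      · exact h'
      · exact absurd ⟨h, h'⟩ hnotAB
    · intro h
      rcases hin.mpr (Or.inl h) with h' | h'
      · exact h'
      · exact absurd ⟨h', h⟩ hnotBA
  have hBiff : t₁ ∈ B ↔ t₂ ∈ B := by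
    constructor
    · intro h
      rcases hin.mp (Or.inr h) with h' | h'
      · exact absurd ⟨h, h'⟩ hnotBA
      · exact h'
    · intro h
      rcases hin.mpr (Or.inr h) with h' | h'
      · exact absurd ⟨h', h⟩ hnotAB
      · exact h'
  unfold splitObs
  by_cases h1A : t₁ ∈ A
  · rw [if_pos h1A, if_pos (hAiff.mp h1A)]
  · rw [if_neg h1A, if_neg (fun h => h1A (hAiff.mpr h))]
    by_cases h1B : t₁ ∈ B
    · rw [if_pos h1B, if_pos (hBiff.mp h1B)]
    · rw [if_neg h1B, if_neg (fun h => h1B (hBiff.mpr h)), ht]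

lemma map_obs_eq_map_split (hpart : A ∪ B = {s | M.obs s = z})
    (hpre : Disjoint (⋃ s ∈ A, preObs M s) (⋃ s ∈ B, preObs M s)) :
    ∀ (l₁ l₂ : List (Act × S)) (s₁ s₂ : S), M.obs s₁ = M.obs s₂ →
      IsPath M s₁ l₁ → IsPath M s₂ l₂ →
      l₁.map (fun p => (p.1, M.obs p.2)) = l₂.map (fun p => (p.1, M.obs p.2)) →
      l₁.map (fun p => (p.1, splitObs M A B p.2)) =
        l₂.map (fun p => (p.1, splitObs M A B p.2)) := by
  intro l₁
  induction l₁ with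
  | nil =>
    intro l₂ s₁ s₂ hs hp1 hp2 hmap
    cases l₂ with
    | nil => rfl
    | cons p l => simp at hmap
  | cons p r ih =>
    intro l₂ s₁ s₂ hs hp1 hp2 hmap
    cases l₂ with
    | nil => simp at hmap
    | cons q r' =>
      obtain ⟨a, t₁⟩ := p
      obtain ⟨b, t₂⟩ := q
      simp only [List.map_cons, List.cons.injEq, Prod.mk.injEq] at hmap
      obtain ⟨⟨hab, hobt⟩, htail⟩ := hmap
      cases hp1 with
      | cons hP1 hp1' =>
        cases hp2 with
        | cons hP2 hp2' =>
          subst hab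
          simp only [List.map_cons, List.cons.injEq, Prod.mk.injEq]
          exact ⟨⟨trivial, obs_eq_splitObs_eq M z A B hpart hpre hs hP1 hP2 hobt⟩,
            ih r' t₁ t₂ hobt hp1' hp2' htail⟩

lemma map_split_eq_map_obs (hpart : A ∪ B = {s | M.obs s = z}) :
    ∀ (l₁ l₂ : List (Act × S)),
      l₁.map (fun p => (p.1, splitObs M A B p.2)) =
        l₂.map (fun p => (p.1, splitObs M A B p.2)) →
      l₁.map (fun p => (p.1, M.obs p.2)) = l₂.map (fun p => (p.1, M.obs p.2)) := by
  intro l₁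
  induction l₁ with
  | nil =>
    intro l₂ hmap
    cases l₂ with
    | nil => rfl
    | cons p l => simp at hmap
  | cons p r ih =>
    intro l₂ hmap
    cases l₂ with
    | nil => simp at hmap
    | cons q r' =>
      simp only [List.map_cons, List.cons.injEq, Prod.mk.injEq] at hmap ⊢
      obtain ⟨⟨hab, hsplit⟩, htail⟩ := hmap
      exact ⟨⟨hab, splitObs_inj_obs M z A B hpart hsplit⟩, ih r' htail⟩

end Aux

/-- Observation splitting does not change the set of DTMCs induced by observation-based
policies. -/
theorem stmt4 {S O Act : Type*} [Fintype Act] (M : POMDP S O Act) (z : O) (A B : Set S)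
    (hpart : A ∪ B = {s | M.obs s = z}) (hdisj : Disjoint A B)
    (hpre : Disjoint (⋃ s ∈ A, preObs M s) (⋃ s ∈ B, preObs M s))
    (hinitObs : ∀ s, M.obs s = M.obs M.init → s = M.init)
    (hinitIn : ∀ s a, M.P s a M.init = 0) :
    {f | ∃ σ, IsPolicy σ ∧ ObsBased M M.obs σ ∧ f = inducedP M σ} =
      {f | ∃ σ, IsPolicy σ ∧ ObsBased M (splitObs M A B) σ ∧ f = inducedP M σ} := by
  ext f
  simp only [Set.mem_setOf_eq]
  constructor
  · rintro ⟨σ, hpol, hob, rfl⟩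
    refine ⟨σ, hpol, ?_, rfl⟩
    intro l₁ l₂ hp1 hp2 heq
    apply hob l₁ l₂ hp1 hp2
    unfold obsSeq at heq ⊢
    simp only [Prod.mk.injEq] at heq ⊢
    exact ⟨trivial, map_split_eq_map_obs M z A B hpart l₁ l₂ heq.2⟩
  · rintro ⟨σ, hpol, hob, rfl⟩
    refine ⟨σ, hpol, ?_, rfl⟩
    intro l₁ l₂ hp1 hp2 heq
    apply hob l₁ l₂ hp1 hp2
    unfold obsSeq at heq ⊢
    simp only [Prod.mk.injEq] at heq ⊢
    exact ⟨trivial, map_obs_eq_map_split M z A B hpart hpre l₁ l₂ M.init M.init rfl hp1 hp2 heq.2⟩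
end

section
/- Let D' result from POMDP D by observation splitting. Then every DTMC induced by a stationary observation-based policy of D is also induced by some stationary observation-based policy of D': {D_σ : σ ∈ Σ_D^stat} ⊆ {D'_σ : σ ∈ Σ_{D'}^stat}. -/
open scoped Classical

/-- A distribution over actions for every observation (a stationary observation-based
randomized policy). -/
def IsStatPolicy {O Act : Type*} [Fintype Act] (σ : O → Act → ℝ) : Prop :=
  ∀ z, (∀ a, 0 ≤ σ z a) ∧ ∑ a : Act, σ z a = 1

/-- Observation splitting (which refines the observation function while leaving the
underlying MDP unchanged) only enlarges the set of DTMCs induced by stationary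
observation-based policies. -/
theorem stmt5 {S O O' Act : Type*} [Fintype Act] (M : POMDP S O Act) (lam' : S → O')
    (hrefine : ∀ s₁ s₂ : S, M.obs s₁ ≠ M.obs s₂ → lam' s₁ ≠ lam' s₂) :
    {f | ∃ σ : O → Act → ℝ, IsStatPolicy σ ∧
        f = inducedP M (fun π a => σ (M.obs (lastState π)) a)} ⊆
      {f | ∃ σ' : O' → Act → ℝ, IsStatPolicy σ' ∧
        f = inducedP M (fun π a => σ' (lam' (lastState π)) a)} := by
  rintro f ⟨σ, hσ, rfl⟩
  refine ⟨fun o' a => if h : ∃ s, lam' s = o' then σ (M.obs h.choose) a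
      else σ (M.obs M.init) a, ?_, ?_⟩
  · intro z
    by_cases h : ∃ s, lam' s = z <;> simp [h, hσ _]
  · funext π π'
    have key : ∀ a, (if h : ∃ s, lam' s = lam' (lastState π) then σ (M.obs h.choose) a
        else σ (M.obs M.init) a) = σ (M.obs (lastState π)) a := by
      intro a
      have h : ∃ s, lam' s = lam' (lastState π) := ⟨lastState π, rfl⟩
      rw [dif_pos h]
      have : M.obs h.choose = M.obs (lastState π) := by
        by_contra hne
        exact hrefine _ _ hne h.choose_spec
      rw [this]
    simp only [inducedP, key]
end

section
/- Let D be a POMDP with problematic states S^pr (states from which target set T is unreachable under some policy), ranking variables r_s ∈ [0,1] and binary variables t_{s,s'}. Suppose the constraints r_s < r_{s'} + 1 − t_{s,s'} for all problematic state-action pairs (s,α) and s' ∈ succ(s,α), and p_s ≤ 1 − σ_{λ(s),α} + Σ_{s'∈succ(s,α)} t_{s,s'} hold. Then for any fixed deterministic stationary policy σ, if under σ the target T is unreachable from a problematic state s whose chosen action is problematic, any feasible solution must satisfy p_s = 0. -/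
open scoped Classical

/-- Transition matrix of the DTMC induced by a deterministic stationary
observation-based policy `σ`. -/
def inducedDet {S O Act : Type*} (M : POMDP S O Act) (σ : O → Act) : S → S → ℝ :=
  fun s s' => M.P s (σ (M.obs s)) s'

/-- Problematic states: states from which `T` is unreachable under some deterministic
stationary observation-based policy. -/
def problematicStates {S O Act : Type*} (M : POMDP S O Act) (T : Set S) : Set S :=
  {s | ∃ σ : O → Act, ¬ CanReach (inducedDet M σ) T s}

/-- Problematic state-action pairs: all successors are problematic. -/
def problematicActs {S O Act : Type*} (M : POMDP S O Act) (T : Set S) : Set (S × Act) :=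
  {p | ∀ s', 0 < M.P p.1 p.2 s' → s' ∈ problematicStates M T}

theorem Finset.sum_mul_lt_of_exists_lt {ι : Type*} [Fintype ι] {w f : ι → ℝ} {m : ℝ}
    (hw : ∀ i, 0 ≤ w i) (hw1 : ∑ i, w i = 1) (hle : ∀ i, 0 < w i → f i ≤ m)
    {j : ι} (hj : 0 < w j) (hlt : f j < m) : ∑ i, w i * f i < m := by
  calc ∑ i, w i * f i < ∑ i, w i * m := by
        refine Finset.sum_lt_sum (fun i _ => ?_) ⟨j, Finset.mem_univ j, by gcongr⟩
        rcases (hw i).eq_or_lt with h | h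
        · simp [← h]
        · exact mul_le_mul_of_nonneg_left (hle i h) h.le
    _ = m := by rw [← Finset.sum_mul, hw1, one_mul]

theorem nonpos_of_subharmonic_of_rank_lt {S : Type*} [Fintype S] (Q : S → S → ℝ)
    (hQ : ∀ x y, 0 ≤ Q x y) (hrow : ∀ x, ∑ y, Q x y = 1)
    (A : Finset S) (hA : ∀ x ∈ A, ∀ y, 0 < Q x y → y ∈ A) (p r : S → ℝ)
    (hp : ∀ x ∈ A, p x ≤ ∑ y, Q x y * p y)
    (hr : ∀ x ∈ A, 0 < p x → ∃ y, 0 < Q x y ∧ r x < r y) :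
    ∀ x ∈ A, p x ≤ 0 := by
  by_contra! ⟨x₀, hx₀A, hx₀⟩
  obtain ⟨x₁, hx₁A, hpmax⟩ := A.exists_max_image p ⟨x₀, hx₀A⟩
  set B := A.filter (fun x => p x = p x₁)
  obtain ⟨x, hxB, hrmax⟩ := B.exists_max_image r ⟨x₁, by simp [B, hx₁A]⟩
  obtain ⟨hxA, hpx⟩ := Finset.mem_filter.mp hxB
  obtain ⟨y, hQy, hry⟩ := hr x hxA (by linarith [hpmax x₀ hx₀A])
  have hyA := hA x hxA y hQy
  have hpy : p y < p x₁ := by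
    refine (hpmax y hyA).lt_of_ne fun hpy => ?_
    exact (hrmax y (Finset.mem_filter.mpr ⟨hyA, hpy⟩)).not_gt hry
  have := Finset.sum_mul_lt_of_exists_lt (hQ x) (hrow x)
    (fun z hz => hpmax z (hA x hxA z hz)) hQy hpy
  linarith [hp x hxA]

theorem not_canReach_of_pos {S : Type*} {P : S → S → ℝ} {T : Set S} {x y : S}
    (hx : ¬ CanReach P T x) (hxy : 0 < P x y) : ¬ CanReach P T y :=
  fun ⟨u, hu, hyu⟩ => hx ⟨u, hu, .head hxy hyu⟩

theorem notMem_of_not_canReach {S : Type*} {P : S → S → ℝ} {T : Set S} {x : S}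
    (hx : ¬ CanReach P T x) : x ∉ T :=
  fun hxT => hx ⟨x, hxT, .refl⟩

theorem mem_problematicActs_of_not_canReach {S O Act : Type*} {M : POMDP S O Act}
    {T : Set S} {σ : O → Act} {x : S} (hx : ¬ CanReach (inducedDet M σ) T x) :
    (x, σ (M.obs x)) ∈ problematicActs M T :=
  fun _ hy => ⟨σ, not_canReach_of_pos hx hy⟩

theorem exists_rank_lt_of_constraints {S O Act : Type*} [Fintype S] {M : POMDP S O Act}
    {T : Set S} {σ : O → Act} {p r : S → ℝ} {t : S → S → ℝ}
    (ht : ∀ s s', t s s' = 0 ∨ t s s' = 1)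
    (hrank : ∀ s a, (s, a) ∈ problematicActs M T → ∀ s', 0 < M.P s a s' →
      r s < r s' + 1 - t s s')
    (hreachCon : ∀ s a, (s, a) ∈ problematicActs M T →
      p s ≤ 1 - (if σ (M.obs s) = a then (1 : ℝ) else 0) +
        ∑ s' ∈ Finset.univ.filter (fun s' => 0 < M.P s a s'), t s s')
    {x : S} (hx : (x, σ (M.obs x)) ∈ problematicActs M T) (hpx : 0 < p x) :
    ∃ y, 0 < inducedDet M σ x y ∧ r x < r y := by
  have hsum := hreachCon x _ hx
  rw [if_pos rfl] at hsum
  obtain ⟨y, hy, hty⟩ : ∃ y ∈ Finset.univ.filter (fun y => 0 < M.P x (σ (M.obs x)) y),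
      0 < t x y :=
    Finset.exists_lt_of_sum_lt (f := 0) (by simpa using hpx.trans_le hsum)
  have hQy : 0 < M.P x (σ (M.obs x)) y := (Finset.mem_filter.mp hy).2
  have ht1 : t x y = 1 := (ht x y).resolve_left (ne_of_gt hty)
  refine ⟨y, hQy, ?_⟩
  linarith [hrank x _ hx y hQy]

theorem stmt11_general {S O Act : Type*} [Fintype S]
    (M : POMDP S O Act) (T : Set S)
    (hP : ∀ s a s', 0 ≤ M.P s a s') (hrow : ∀ s a, ∑ s' : S, M.P s a s' = 1)
    (σ : O → Act) (p r : S → ℝ) (t : S → S → ℝ)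
    -- the variables `p`, `r`, `t` range over [0,1], and `t` is binary
    (hp01 : ∀ s, 0 ≤ p s ∧ p s ≤ 1)
    (ht : ∀ s s', t s s' = 0 ∨ t s s' = 1)
    -- the probability constraints (for the policy encoded by `σ`)
    (hprob : ∀ s, s ∉ T → ∀ a : Act,
      p s ≤ (1 - (if σ (M.obs s) = a then (1 : ℝ) else 0)) + ∑ s' : S, M.P s a s' * p s')
    -- the ranking constraints for problematic state-action pairs
    (hrank : ∀ s a, (s, a) ∈ problematicActs M T → ∀ s', 0 < M.P s a s' →
      r s < r s' + 1 - t s s')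
    (hreachCon : ∀ s a, (s, a) ∈ problematicActs M T →
      p s ≤ 1 - (if σ (M.obs s) = a then (1 : ℝ) else 0) +
        ∑ s' ∈ Finset.univ.filter (fun s' => 0 < M.P s a s'), t s s') :
    ∀ s : S, ¬ CanReach (inducedDet M σ) T s →
      (s, σ (M.obs s)) ∈ problematicActs M T → p s = 0 := by
  intro s hs _
  set A := Finset.univ.filter (fun x => ¬ CanReach (inducedDet M σ) T x)
  have hsub : ∀ x ∈ A, p x ≤ ∑ y, inducedDet M σ x y * p y := by
    intro x hxA
    have hx := (Finset.mem_filter.mp hxA).2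
    simpa [inducedDet] using hprob x (notMem_of_not_canReach hx) (σ (M.obs x))
  have hnonpos := nonpos_of_subharmonic_of_rank_lt (inducedDet M σ)
    (fun x => hP x _) (fun x => hrow x _) A
    (fun x hx y hy => by simpa [A] using not_canReach_of_pos (Finset.mem_filter.mp hx).2 hy)
    p r hsub
    (fun x hx => exists_rank_lt_of_constraints ht hrank hreachCon
      (mem_problematicActs_of_not_canReach (Finset.mem_filter.mp hx).2))
  exact le_antisymm (hnonpos s (by simpa [A] using hs)) (hp01 s).1

/-- The ranking constraints force `p_s = 0` for states from which, under the encoded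
deterministic stationary policy, the target set is unreachable and whose chosen action
is problematic. -/
theorem stmt11 {S O Act : Type*} [Fintype S] [Fintype Act]
    (M : POMDP S O Act) (T : Set S)
    (hP : ∀ s a s', 0 ≤ M.P s a s') (hrow : ∀ s a, ∑ s' : S, M.P s a s' = 1)
    (σ : O → Act) (p r : S → ℝ) (t : S → S → ℝ)
    -- the variables `p`, `r`, `t` range over [0,1], and `t` is binary
    (hp01 : ∀ s, 0 ≤ p s ∧ p s ≤ 1)
    (hr01 : ∀ s, 0 ≤ r s ∧ r s ≤ 1)
    (ht : ∀ s s', t s s' = 0 ∨ t s s' = 1)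
    -- the probability constraints (for the policy encoded by `σ`)
    (hT : ∀ s ∈ T, p s = 1)
    (hprob : ∀ s, s ∉ T → ∀ a : Act,
      p s ≤ (1 - (if σ (M.obs s) = a then (1 : ℝ) else 0)) + ∑ s' : S, M.P s a s' * p s')
    -- the ranking constraints for problematic state-action pairs
    (hrank : ∀ s a, (s, a) ∈ problematicActs M T → ∀ s', 0 < M.P s a s' →
      r s < r s' + 1 - t s s')
    (hreachCon : ∀ s a, (s, a) ∈ problematicActs M T →
      p s ≤ 1 - (if σ (M.obs s) = a then (1 : ℝ) else 0) +
        ∑ s' ∈ Finset.univ.filter (fun s' => 0 < M.P s a s'), t s s') :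
    ∀ s : S, ¬ CanReach (inducedDet M σ) T s →
      (s, σ (M.obs s)) ∈ problematicActs M T → p s = 0 :=
  stmt11_general M T hP hrow σ p r t hp01 ht hprob hrank hreachCon
end

section
/- In a finite MDP with reward function R and discount β ∈ (0,1), let σ* be a stationary policy with value vector v*, and define σ'(s) ∈ argmax_{α ∈ Act(s)} [R(s,α) + β·Σ_{s'} P(s,α,s')·v*_{s'}]. If σ'(s) = σ*(s) for all s, then v* is the optimal value vector, i.e., σ* is an optimal stationary policy. -/
/-- Policy-iteration termination correctness: in a finite discounted MDP, if a
stationary policy `σ*` is greedy with respect to its own value vector `v*`, then `v*`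
dominates the value vector of every stationary policy, i.e. `σ*` is an optimal
stationary policy. -/
theorem stmt14 {S Act : Type*} [Fintype S] [Fintype Act]
    (P : S → Act → S → ℝ) (R : S → Act → ℝ) (β : ℝ)
    (hβ : β ∈ Set.Ioo (0 : ℝ) 1)
    (hP : ∀ s a s', 0 ≤ P s a s') (hrow : ∀ s a, ∑ s' : S, P s a s' = 1)
    (σstar : S → Act) (vstar : S → ℝ)
    (hval : ∀ s, vstar s = R s (σstar s) + β * ∑ s' : S, P s (σstar s) s' * vstar s')
    (hgreedy : ∀ s a, R s a + β * ∑ s' : S, P s a s' * vstar s' ≤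
      R s (σstar s) + β * ∑ s' : S, P s (σstar s) s' * vstar s') :
    ∀ (σ : S → Act) (v : S → ℝ),
      (∀ s, v s = R s (σ s) + β * ∑ s' : S, P s (σ s) s' * v s') →
      ∀ s, v s ≤ vstar s := by
  intro σ v hv s0
  have hne : (Finset.univ : Finset S).Nonempty := ⟨s0, Finset.mem_univ s0⟩
  obtain ⟨s, -, hs⟩ := Finset.exists_max_image Finset.univ (fun t => v t - vstar t) hne
  have hs' : ∀ t : S, v t - vstar t ≤ v s - vstar s := fun t => hs t (Finset.mem_univ t)
  -- key inequality at the maximizer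
  have hsplit : ∑ s' : S, P s (σ s) s' * (v s' - vstar s')
      = (∑ s' : S, P s (σ s) s' * v s') - ∑ s' : S, P s (σ s) s' * vstar s' := by
    rw [← Finset.sum_sub_distrib]
    exact Finset.sum_congr rfl fun s' _ => mul_sub _ _ _
  have h1 : v s - vstar s ≤ β * ∑ s' : S, P s (σ s) s' * (v s' - vstar s') := by
    rw [hsplit, mul_sub]
    have hg := hgreedy s (σ s)
    have h2 := hv s
    have h3 := hval s
    linarith
  have h2 : ∑ s' : S, P s (σ s) s' * (v s' - vstar s') ≤ v s - vstar s := by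
    calc ∑ s' : S, P s (σ s) s' * (v s' - vstar s')
        ≤ ∑ s' : S, P s (σ s) s' * (v s - vstar s) :=
          Finset.sum_le_sum fun s' _ =>
            mul_le_mul_of_nonneg_left (hs' s') (hP s (σ s) s')
      _ = (∑ s' : S, P s (σ s) s') * (v s - vstar s) := (Finset.sum_mul ..).symm
      _ = v s - vstar s := by rw [hrow, one_mul]
  obtain ⟨hβ0, hβ1⟩ := hβ
  have hds : v s - vstar s ≤ 0 := by nlinarith
  have := hs' s0
  linarith
end
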